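/- arXiv:2501.04530 — 5 statements merged into one kernel-verified Lean document; each statement's English description precedes it below -/
import Mathlib

section
/- Let P(z,z̄) = Σ_{(a,b)} c_{a,b} z₁^{a₁}z₂^{a₂}z̄₁^{b₁}z̄₂^{b₂} be a real-valued polynomial on ℂ² (finitely many nonzero coefficients c_{a,b} ∈ ℂ satisfying the reality condition c_{b,a} = conj(c_{a,b})), and let Y = λ₁z₁∂_{z₁} + λ₂z₂∂_{z₂} with λ₁, λ₂ ∈ ℝ. Then Re(YP) ≡ 0 (where YP := λ₁z₁∂P/∂z₁ + λ₂z₂∂P/∂z₂, differentiating only the holomorphic variables z₁, z₂ and treating z̄₁, z̄₂ as constants) if and only if every monomial z₁^{a₁}z₂^{a₂}z̄₁^{b₁}z̄₂^{b₂} with nonzero coefficient in P satisfies λ₁(a₁+b₁) + λ₂(a₂+b₂) = 0. -/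
/-!
STATEMENT 0: A diagonal field `Y = λ₁z₁∂_{z₁} + λ₂z₂∂_{z₂}` with real `λⱼ` satisfies
`Re(YP) ≡ 0` iff every monomial of `P` has weight `0` w.r.t. `(λ₁, λ₂)`.

A real-valued polynomial `P(z, z̄)` on `ℂ²` is encoded by its finitely supported
coefficient function `c : ((ℕ × ℕ) × (ℕ × ℕ)) →₀ ℂ`, where the index
`((a₁, a₂), (b₁, b₂))` corresponds to the monomial `z₁^{a₁} z₂^{a₂} z̄₁^{b₁} z̄₂^{b₂}`.
-/

open Complex

/-- Index of a monomial `z₁^{a₁} z₂^{a₂} z̄₁^{b₁} z̄₂^{b₂}`. -/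
abbrev MonIdx := (ℕ × ℕ) × (ℕ × ℕ)

/-- The monomial `z₁^{a₁} z₂^{a₂} z̄₁^{b₁} z̄₂^{b₂}` as a function of `z = (z₁, z₂) ∈ ℂ²`. -/
noncomputable def monFn (k : MonIdx) (z : ℂ × ℂ) : ℂ :=
  z.1 ^ k.1.1 * z.2 ^ k.1.2 * (starRingEnd ℂ z.1) ^ k.2.1 * (starRingEnd ℂ z.2) ^ k.2.2

/-- The value `P(z, z̄)` of the polynomial with coefficients `c`. -/
noncomputable def evalP (c : MonIdx →₀ ℂ) (z : ℂ × ℂ) : ℂ :=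
  c.sum fun k v => v * monFn k z

/-- The reality condition `c_{b,a} = conj (c_{a,b})`, i.e. `P` is real valued. -/
def RealCoeff (c : MonIdx →₀ ℂ) : Prop :=
  ∀ a b : ℕ × ℕ, c (b, a) = starRingEnd ℂ (c (a, b))

/-- The formal partial derivative `∂P/∂z₁` (differentiating only the holomorphic
variable `z₁`, treating `z̄₁, z̄₂` as constants), evaluated at `z`. -/
noncomputable def dz1P (c : MonIdx →₀ ℂ) (z : ℂ × ℂ) : ℂ :=
  c.sum fun k v => v * (k.1.1 : ℂ) * z.1 ^ (k.1.1 - 1) * z.2 ^ k.1.2 *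
    (starRingEnd ℂ z.1) ^ k.2.1 * (starRingEnd ℂ z.2) ^ k.2.2

/-- The formal partial derivative `∂P/∂z₂`, evaluated at `z`. -/
noncomputable def dz2P (c : MonIdx →₀ ℂ) (z : ℂ × ℂ) : ℂ :=
  c.sum fun k v => v * (k.1.2 : ℂ) * z.1 ^ k.1.1 * z.2 ^ (k.1.2 - 1) *
    (starRingEnd ℂ z.1) ^ k.2.1 * (starRingEnd ℂ z.2) ^ k.2.2


open Polynomial Finset in
private lemma real_roots_zero (p : Polynomial ℂ) (h : ∀ x : ℝ, p.eval (x : ℂ) = 0) :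
    p = 0 := by
  apply p.eq_zero_of_infinite_isRoot
  apply Set.Infinite.mono (s := Set.range ((↑) : ℝ → ℂ))
  · rintro _ ⟨x, rfl⟩; exact h x
  · exact Set.infinite_range_of_injective Complex.ofReal_injective

open Polynomial Finset in
private lemma circle_roots_zero (p : Polynomial ℂ)
    (h : ∀ θ : ℝ, p.eval (Complex.exp (θ * I)) = 0) : p = 0 := by
  apply p.eq_zero_of_infinite_isRoot
  have hinj : Set.InjOn (fun θ : ℝ => Complex.exp (θ * I)) (Set.Ioo 0 1) := by
    intro a ha b hb hab
    simp only [Complex.exp_eq_exp_iff_exists_int] at hab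
    obtain ⟨n, hn⟩ := hab
    have h1 : (a : ℂ) * I = (((b : ℝ) + n * (2 * Real.pi)) : ℝ) * I := by
      rw [hn]; push_cast; ring
    have h2 : (a : ℝ) = b + n * (2 * Real.pi) := by
      have := mul_right_cancel₀ Complex.I_ne_zero h1
      exact_mod_cast this
    have hn0 : n = 0 := by
      by_contra hne
      have h3 : (1 : ℝ) ≤ |(n : ℝ)| := by exact_mod_cast Int.one_le_abs hne
      have h4 : |a - b| < 1 := by
        rw [abs_lt]; constructor <;> [linarith [ha.1, hb.2]; linarith [ha.2, hb.1]]
      have h5 : |(n : ℝ) * (2 * Real.pi)| < 1 := by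
        rw [show (n : ℝ) * (2 * Real.pi) = a - b by linarith]; exact h4
      rw [abs_mul, abs_of_pos (by positivity : (0:ℝ) < 2 * Real.pi)] at h5
      nlinarith [Real.pi_gt_three]
    rw [hn0] at h2; simpa using h2
  apply Set.Infinite.mono (s := (fun θ : ℝ => Complex.exp (θ * I)) '' Set.Ioo 0 1)
  · rintro _ ⟨θ, _, rfl⟩; exact h θ
  · exact (Set.Ioo_infinite (by norm_num)).image hinj

open Polynomial Finset in
private lemma onevar (s : Finset (ℕ × ℕ)) (e : ℕ × ℕ → ℂ)
    (h : ∀ z : ℂ, ∑ p ∈ s, e p * z ^ p.1 * (starRingEnd ℂ z) ^ p.2 = 0) :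
    ∀ p ∈ s, e p = 0 := by
  intro p hp
  classical
  set n := p.1 + p.2 with hn
  set t := s.filter (fun q => q.1 + q.2 = n) with ht
  have hconjexp : ∀ θ : ℝ, starRingEnd ℂ (Complex.exp (θ * I)) = Complex.exp (-(θ * I)) := by
    intro θ
    rw [← Complex.exp_conj]
    congr 1
    simp [Complex.conj_ofReal]
  have step1 : ∀ θ : ℝ,
      ∑ q ∈ t, e q * Complex.exp (θ * I) ^ q.1 * Complex.exp (-(θ * I)) ^ q.2 = 0 := by
    intro θ
    set u := Complex.exp (θ * I) with hu
    set v := Complex.exp (-(θ * I)) with hv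
    set Q : Polynomial ℂ := ∑ q ∈ s, Polynomial.monomial (q.1 + q.2) (e q * u ^ q.1 * v ^ q.2)
      with hQ
    have hQ0 : Q = 0 := by
      apply real_roots_zero
      intro x
      rw [hQ, Polynomial.eval_finset_sum, ← h ((x : ℂ) * u)]
      apply Finset.sum_congr rfl
      intro q _
      rw [Polynomial.eval_monomial, map_mul, hconjexp θ, Complex.conj_ofReal, ← hv,
        mul_pow, mul_pow, pow_add]
      ring
    have hc := congrArg (fun P => Polynomial.coeff P n) hQ0
    simp only [hQ, Polynomial.finset_sum_coeff, Polynomial.coeff_monomial,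
      Polynomial.coeff_zero] at hc
    rw [ht, Finset.sum_filter]
    exact hc
  have huv : ∀ θ : ℝ, Complex.exp (θ * I) * Complex.exp (-(θ * I)) = 1 := by
    intro θ; rw [← Complex.exp_add]; simp
  set R : Polynomial ℂ := ∑ q ∈ t, Polynomial.monomial (2 * q.1) (e q) with hR
  have hR0 : R = 0 := by
    apply circle_roots_zero
    intro θ
    have h2 : (∑ q ∈ t, e q * Complex.exp (θ * I) ^ q.1 * Complex.exp (-(θ * I)) ^ q.2) *
        Complex.exp (θ * I) ^ n = 0 := by rw [step1 θ, zero_mul]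
    rw [Finset.sum_mul] at h2
    rw [hR, Polynomial.eval_finset_sum, ← h2]
    apply Finset.sum_congr rfl
    intro q hq
    have hqn : q.1 + q.2 = n := (Finset.mem_filter.mp hq).2
    rw [Polynomial.eval_monomial]
    have key : e q * Complex.exp (θ * I) ^ q.1 * Complex.exp (-(θ * I)) ^ q.2 *
        Complex.exp (θ * I) ^ n
        = e q * Complex.exp (θ * I) ^ (2 * q.1) *
          (Complex.exp (θ * I) * Complex.exp (-(θ * I))) ^ q.2 := by
      rw [← hqn]; ring
    rw [key, huv θ, one_pow, mul_one]
  have hps : p ∈ t := Finset.mem_filter.mpr ⟨hp, rfl⟩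
  have hcoeff : ∑ q ∈ t, (if 2 * q.1 = 2 * p.1 then e q else 0) = 0 := by
    have h0 : R.coeff (2 * p.1) = 0 := by rw [hR0, Polynomial.coeff_zero]
    rw [hR, Polynomial.finset_sum_coeff] at h0
    simpa only [Polynomial.coeff_monomial] using h0
  rw [Finset.sum_eq_single_of_mem p hps ?_] at hcoeff
  · simpa using hcoeff
  · intro q hq hne
    have hqn : q.1 + q.2 = n := (Finset.mem_filter.mp hq).2
    rw [if_neg]
    intro hc
    apply hne
    have h1 : q.1 = p.1 := by omega
    have h2 : q.2 = p.2 := by omega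
    exact Prod.ext h1 h2

open Finset in
private lemma twovar (s : Finset MonIdx) (d : MonIdx → ℂ)
    (h : ∀ z : ℂ × ℂ, ∑ k ∈ s, d k * monFn k z = 0) :
    ∀ k ∈ s, d k = 0 := by
  classical
  intro k0 hk0
  have step1 : ∀ z1 : ℂ, ∑ k ∈ s.filter (fun k => (k.1.2, k.2.2) = (k0.1.2, k0.2.2)),
      d k * z1 ^ k.1.1 * (starRingEnd ℂ z1) ^ k.2.1 = 0 := by
    intro z1
    refine onevar (s.image (fun k => (k.1.2, k.2.2)))
      (fun q => ∑ k ∈ s.filter (fun k => (k.1.2, k.2.2) = q),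
        d k * z1 ^ k.1.1 * (starRingEnd ℂ z1) ^ k.2.1) ?_ (k0.1.2, k0.2.2)
      (Finset.mem_image_of_mem _ hk0)
    intro w
    have hterm : ∀ q ∈ s.image (fun k => (k.1.2, k.2.2)),
        (∑ k ∈ s.filter (fun k => (k.1.2, k.2.2) = q),
          d k * z1 ^ k.1.1 * (starRingEnd ℂ z1) ^ k.2.1) * w ^ q.1 * (starRingEnd ℂ w) ^ q.2
        = ∑ k ∈ s.filter (fun k => (k.1.2, k.2.2) = q), d k * monFn k (z1, w) := by
      intro q _
      rw [Finset.sum_mul, Finset.sum_mul]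
      apply Finset.sum_congr rfl
      intro k hk
      have hkq : (k.1.2, k.2.2) = q := (Finset.mem_filter.mp hk).2
      rw [← hkq]
      simp only [monFn]
      ring
    rw [Finset.sum_congr rfl hterm,
      Finset.sum_fiberwise_of_maps_to (fun k hk => Finset.mem_image_of_mem _ hk)]
    exact h (z1, w)
  have hk0' : k0 ∈ s.filter (fun k => (k.1.2, k.2.2) = (k0.1.2, k0.2.2)) :=
    Finset.mem_filter.mpr ⟨hk0, rfl⟩
  set s2 := s.filter (fun k => (k.1.2, k.2.2) = (k0.1.2, k0.2.2)) with hs2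
  have step2 := onevar (s2.image (fun k => (k.1.1, k.2.1)))
    (fun q => ∑ k ∈ s2.filter (fun k => (k.1.1, k.2.1) = q), d k) ?_ (k0.1.1, k0.2.1)
    (Finset.mem_image_of_mem _ hk0')
  · have hsingle : s2.filter (fun k => (k.1.1, k.2.1) = (k0.1.1, k0.2.1)) = {k0} := by
      ext k
      simp only [hs2, Finset.mem_filter, Finset.mem_singleton, Prod.mk.injEq]
      constructor
      · rintro ⟨⟨hks, h2a, h2b⟩, h1a, h1b⟩
        exact Prod.ext (Prod.ext h1a h2a) (Prod.ext h1b h2b)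
      · rintro rfl
        exact ⟨⟨hk0, rfl, rfl⟩, rfl, rfl⟩
    have step2' : ∑ k ∈ s2.filter (fun k => (k.1.1, k.2.1) = (k0.1.1, k0.2.1)), d k = 0 :=
      step2
    rw [hsingle, Finset.sum_singleton] at step2'
    exact step2'
  · intro z1
    have hterm : ∀ q ∈ s2.image (fun k => (k.1.1, k.2.1)),
        (∑ k ∈ s2.filter (fun k => (k.1.1, k.2.1) = q), d k) * z1 ^ q.1
          * (starRingEnd ℂ z1) ^ q.2
        = ∑ k ∈ s2.filter (fun k => (k.1.1, k.2.1) = q),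
            d k * z1 ^ k.1.1 * (starRingEnd ℂ z1) ^ k.2.1 := by
      intro q _
      rw [Finset.sum_mul, Finset.sum_mul]
      apply Finset.sum_congr rfl
      intro k hk
      have hkq : (k.1.1, k.2.1) = q := (Finset.mem_filter.mp hk).2
      rw [← hkq]
    rw [Finset.sum_congr rfl hterm,
      Finset.sum_fiberwise_of_maps_to (fun k hk => Finset.mem_image_of_mem _ hk)]
    exact step1 z1

private lemma pow_deriv_aux (m : ℕ) (z : ℂ) :
    z * ((m : ℂ) * z ^ (m - 1)) = (m : ℂ) * z ^ m := by
  cases m with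
  | zero => simp
  | succ n => push_cast; rw [pow_succ]; ring

theorem stmt_0 (c : MonIdx →₀ ℂ) (hreal : RealCoeff c) (l1 l2 : ℝ) :
    (∀ z : ℂ × ℂ,
        ((l1 : ℂ) * z.1 * dz1P c z + (l2 : ℂ) * z.2 * dz2P c z).re = 0) ↔
    (∀ k : MonIdx, c k ≠ 0 →
        l1 * ((k.1.1 : ℝ) + (k.2.1 : ℝ)) + l2 * ((k.1.2 : ℝ) + (k.2.2 : ℝ)) = 0) := by
  classical
  have hconj : ∀ k : MonIdx, starRingEnd ℂ (c k) = c (k.2, k.1) := fun k =>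
    (hreal k.1 k.2).symm
  have hmonconj : ∀ (k : MonIdx) (z : ℂ × ℂ),
      starRingEnd ℂ (monFn k z) = monFn (k.2, k.1) z := by
    intro k z
    simp only [monFn, map_mul, map_pow, Complex.conj_conj]
    ring
  have hYP : ∀ z : ℂ × ℂ, (l1 : ℂ) * z.1 * dz1P c z + (l2 : ℂ) * z.2 * dz2P c z
      = ∑ k ∈ c.support, c k * ((l1 : ℂ) * k.1.1 + (l2 : ℂ) * k.1.2) * monFn k z := by
    intro z
    rw [dz1P, dz2P, Finsupp.sum, Finsupp.sum, Finset.mul_sum, Finset.mul_sum,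
      ← Finset.sum_add_distrib]
    apply Finset.sum_congr rfl
    intro k _
    have e1 := pow_deriv_aux k.1.1 z.1
    have e2 := pow_deriv_aux k.1.2 z.2
    simp only [monFn]
    linear_combination ((l1 : ℂ) * c k * z.2 ^ k.1.2 * (starRingEnd ℂ z.1) ^ k.2.1 *
        (starRingEnd ℂ z.2) ^ k.2.2) * e1 +
      ((l2 : ℂ) * c k * z.1 ^ k.1.1 * (starRingEnd ℂ z.1) ^ k.2.1 *
        (starRingEnd ℂ z.2) ^ k.2.2) * e2
  have hswap : ∀ z : ℂ × ℂ,
      ∑ k ∈ c.support, starRingEnd ℂ (c k * ((l1 : ℂ) * k.1.1 + (l2 : ℂ) * k.1.2) * monFn k z)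
      = ∑ k ∈ c.support, c k * ((l1 : ℂ) * k.2.1 + (l2 : ℂ) * k.2.2) * monFn k z := by
    intro z
    apply Finset.sum_equiv (Equiv.prodComm (ℕ × ℕ) (ℕ × ℕ))
    · intro k
      simp only [Finsupp.mem_support_iff, Equiv.prodComm_apply]
      have hck : starRingEnd ℂ (c k) = c k.swap := hconj k
      rw [← hck, starRingEnd_apply, star_ne_zero]
    · intro k _
      rw [map_mul, map_mul, hconj k, hmonconj k z]
      simp only [map_add, map_mul, Complex.conj_ofReal, map_natCast]
      rfl
  have hid : ∀ z : ℂ × ℂ,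
      ((l1 : ℂ) * z.1 * dz1P c z + (l2 : ℂ) * z.2 * dz2P c z)
        + starRingEnd ℂ ((l1 : ℂ) * z.1 * dz1P c z + (l2 : ℂ) * z.2 * dz2P c z)
      = ∑ k ∈ c.support, c k *
          (((l1 * ((k.1.1 : ℝ) + (k.2.1 : ℝ)) + l2 * ((k.1.2 : ℝ) + (k.2.2 : ℝ))) : ℝ) : ℂ) *
          monFn k z := by
    intro z
    rw [hYP z, map_sum, hswap z, ← Finset.sum_add_distrib]
    apply Finset.sum_congr rfl
    intro k _
    push_cast
    ring
  constructor
  · intro H k hck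
    have hzero : ∀ z : ℂ × ℂ, ∑ k ∈ c.support, c k *
        (((l1 * ((k.1.1 : ℝ) + (k.2.1 : ℝ)) + l2 * ((k.1.2 : ℝ) + (k.2.2 : ℝ))) : ℝ) : ℂ) *
        monFn k z = 0 := by
      intro z
      rw [← hid z, Complex.add_conj, H z]
      simp
    have h0 := twovar c.support
      (fun k => c k *
        (((l1 * ((k.1.1 : ℝ) + (k.2.1 : ℝ)) + l2 * ((k.1.2 : ℝ) + (k.2.2 : ℝ))) : ℝ) : ℂ))
      hzero k (Finsupp.mem_support_iff.mpr hck)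
    rcases mul_eq_zero.mp h0 with h | h
    · exact absurd h hck
    · exact Complex.ofReal_eq_zero.mp h
  · intro H z
    have hzero : ∑ k ∈ c.support, c k *
        (((l1 * ((k.1.1 : ℝ) + (k.2.1 : ℝ)) + l2 * ((k.1.2 : ℝ) + (k.2.2 : ℝ))) : ℝ) : ℂ) *
        monFn k z = 0 := by
      apply Finset.sum_eq_zero
      intro k hk
      rw [H k (Finsupp.mem_support_iff.mp hk), Complex.ofReal_zero, mul_zero, zero_mul]
    have h2 := hid z
    rw [hzero, Complex.add_conj] at h2
    have h3 := Complex.ofReal_eq_zero.mp h2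
    linarith
end

section
/- Let n ≥ 1, c ∈ ℂ, and let Q ∈ ℂ[z₁,z₂] be a homogeneous polynomial of total degree n satisfying z₁·∂Q/∂z₁ + (z₂ + c·z₁)·∂Q/∂z₂ = 0. Then Q = 0. -/
open MvPolynomial

/-!
By Euler's identity the equation says `n • Q = -c • (z₁ * ∂Q/∂z₂)`. Since `n ≠ 0`, `Q` is then a
multiple of its image under `z₁ * ∂/∂z₂`, which lowers the exponent of `z₂`; at a monomial of `Q`
where that exponent is maximal the image has coefficient `0`, so `Q` has no monomials.
-/

theorem MvPolynomial.eq_zero_of_eq_smul_X_mul_pderiv {R σ : Type*} [CommSemiring R] {i j : σ}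
    (hij : i ≠ j) {a : R} {p : MvPolynomial σ R} (h : p = a • (X j * pderiv i p)) : p = 0 := by
  classical
  by_contra hp
  obtain ⟨m, hm, hmax⟩ := p.support.exists_max_image (· i) (support_nonempty.mpr hp)
  apply mem_support_iff.mp hm
  rw [h, coeff_smul, coeff_X_mul', coeff_pderiv]
  split_ifs
  · have hraised : coeff (m - Finsupp.single j 1 + Finsupp.single i 1) p = 0 := by
      by_contra hne
      have := hmax _ (mem_support_iff.mpr hne)
      simp [hij] at this
    simp [hraised]
  · simp

/-- If `Q ∈ ℂ[z₁,z₂]` is homogeneous of total degree `n ≥ 1` and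
`z₁·∂Q/∂z₁ + (z₂ + c·z₁)·∂Q/∂z₂ = 0`, then `Q = 0`.  Here `X 0 = z₁`, `X 1 = z₂`. -/
theorem stmt_6 (n : ℕ) (hn : 1 ≤ n) (c : ℂ) (Q : MvPolynomial (Fin 2) ℂ)
    (hQ : Q.IsHomogeneous n)
    (h : MvPolynomial.X 0 * MvPolynomial.pderiv (0 : Fin 2) Q +
        (MvPolynomial.X 1 + MvPolynomial.C c * MvPolynomial.X 0) *
          MvPolynomial.pderiv (1 : Fin 2) Q = 0) :
    Q = 0 := by
  have euler := hQ.sum_X_mul_pderiv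
  rw [Fin.sum_univ_two, ← Nat.cast_smul_eq_nsmul ℂ] at euler
  have hn' : (n : ℂ) ≠ 0 := Nat.cast_ne_zero.mpr (by omega)
  refine eq_zero_of_eq_smul_X_mul_pderiv (i := 1) (j := 0) (by decide) (a := -c / n) ?_
  have hnQ : (n : ℂ) • Q + c • (X 0 * pderiv 1 Q) = 0 := by
    rw [← euler, smul_eq_C_mul]
    linear_combination h
  calc Q = (n : ℂ)⁻¹ • ((n : ℂ) • Q) := by rw [smul_smul, inv_mul_cancel₀ hn', one_smul]
    _ = (-c / n) • (X 0 * pderiv 1 Q) := by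
      rw [eq_neg_of_add_eq_zero_left hnQ, smul_neg, smul_smul, div_eq_inv_mul, mul_neg, neg_smul]
end

section
/- Let p, q, α, β, N, K, m be nonnegative integers with Kp ≥ mα and Kq ≥ mβ. Then for all z₁, z₂ ∈ ℂ: Re( Σ_{j=0}^{m} [1/(j!·(m−j)!)] · z₁^{Kp−jα} z₂^{Kq−jβ} · conj(z₁)^{Kp−(m−j)α+Np} · conj(z₂)^{Kq−(m−j)β+Nq} ) = (2^m/m!) · Re((z₁^p z₂^q)^N) · |z₁|^{2(Kp−mα)} · |z₂|^{2(Kq−mβ)} · (Re(z₁^α z₂^β))^m. -/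
/-!
Writing `w = z₁^α z₂^β`, the `j`-th summand factors as
`|z₁|^{2(Kp−mα)} |z₂|^{2(Kq−mβ)} · conj((z₁^p z₂^q)^N) · w^{m−j} conj(w)^j / (j!(m−j)!)`,
so the sum is the real prefactor times `conj((z₁^p z₂^q)^N) · (w + conj w)^m / m!` by the binomial
theorem, and `w + conj w = 2 Re w`.
-/

open Complex Finset

theorem sum_range_inv_factorial_mul_pow_mul_pow {F : Type*} [Field F] [CharZero F]
    (m : ℕ) (x y : F) :
    ∑ j ∈ range (m + 1), ((j.factorial * (m - j).factorial : F))⁻¹ * x ^ (m - j) * y ^ j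
      = (x + y) ^ m / m.factorial := by
  rw [add_comm x y, add_pow, sum_div]
  refine sum_congr rfl fun j hj => ?_
  have hjm : j ≤ m := Nat.lt_succ_iff.mp (mem_range.mp hj)
  have hchoose : (m.choose j : F) * j.factorial * (m - j).factorial = m.factorial := by
    exact_mod_cast Nat.choose_mul_factorial_mul_factorial hjm
  have hj : (j.factorial : F) ≠ 0 := Nat.cast_ne_zero.mpr j.factorial_ne_zero
  have hmj : ((m - j).factorial : F) ≠ 0 := Nat.cast_ne_zero.mpr (m - j).factorial_ne_zero
  have hc : (m.choose j : F) ≠ 0 := Nat.cast_ne_zero.mpr (Nat.choose_pos hjm).ne'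
  rw [← hchoose]
  field_simp

theorem pow_sub_mul_mul_pow_sub_add {M : Type*} [CommMonoid M] (x y : M) {n m j a : ℕ}
    (hma : m * a ≤ n) (hjm : j ≤ m) (c : ℕ) :
    x ^ (n - j * a) * y ^ (n - (m - j) * a + c)
      = (x * y) ^ (n - m * a) * (x ^ a) ^ (m - j) * (y ^ a) ^ j * y ^ c := by
  have hsplit : j * a + (m - j) * a = m * a := by rw [← add_mul, Nat.add_sub_cancel' hjm]
  obtain ⟨r, rfl⟩ := Nat.exists_eq_add_of_le hma
  have hx : m * a + r - j * a = r + (m - j) * a := by omega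
  have hy : m * a + r - (m - j) * a + c = r + j * a + c := by omega
  rw [hx, hy, Nat.add_sub_cancel_left]
  simp only [pow_add, mul_pow, ← pow_mul]
  ac_rfl

/-- evaluation of the chain sum of a pure `X`-pair for the monomial field
`X = i z₁^α z₂^β (q z₁∂_{z₁} − p z₂∂_{z₂})`:
`Re( Σ_{j=0}^{m} z₁^{Kp−jα} z₂^{Kq−jβ} conj(z₁)^{Kp−(m−j)α+Np} conj(z₂)^{Kq−(m−j)β+Nq} / (j!(m−j)!) )
  = (2^m/m!)·Re((z₁^p z₂^q)^N)·|z₁|^{2(Kp−mα)}·|z₂|^{2(Kq−mβ)}·(Re(z₁^α z₂^β))^m`. -/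
theorem stmt_9 (p q a b N K m : ℕ) (h1 : m * a ≤ K * p) (h2 : m * b ≤ K * q)
    (z1 z2 : ℂ) :
    (∑ j ∈ Finset.range (m + 1),
        ((j.factorial * (m - j).factorial : ℂ))⁻¹ *
          z1 ^ (K * p - j * a) * z2 ^ (K * q - j * b) *
          (starRingEnd ℂ z1) ^ (K * p - (m - j) * a + N * p) *
          (starRingEnd ℂ z2) ^ (K * q - (m - j) * b + N * q)).re =
      (2 : ℝ) ^ m / (m.factorial : ℝ) *
        ((z1 ^ p * z2 ^ q) ^ N).re *
        ‖z1‖ ^ (2 * (K * p - m * a)) *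
        ‖z2‖ ^ (2 * (K * q - m * b)) *
        ((z1 ^ a * z2 ^ b).re) ^ m := by
  set w := z1 ^ a * z2 ^ b
  set r : ℝ := normSq z1 ^ (K * p - m * a) * normSq z2 ^ (K * q - m * b)
  have hterm : ∀ j ∈ range (m + 1),
      ((j.factorial * (m - j).factorial : ℂ))⁻¹ *
          z1 ^ (K * p - j * a) * z2 ^ (K * q - j * b) *
          (starRingEnd ℂ z1) ^ (K * p - (m - j) * a + N * p) *
          (starRingEnd ℂ z2) ^ (K * q - (m - j) * b + N * q)
        = r * starRingEnd ℂ ((z1 ^ p * z2 ^ q) ^ N) *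
          (((j.factorial * (m - j).factorial : ℂ))⁻¹ * w ^ (m - j) * starRingEnd ℂ w ^ j) := by
    intro j hj
    have hjm : j ≤ m := Nat.lt_succ_iff.mp (mem_range.mp hj)
    calc _ = ((j.factorial * (m - j).factorial : ℂ))⁻¹ *
            (z1 ^ (K * p - j * a) * starRingEnd ℂ z1 ^ (K * p - (m - j) * a + N * p)) *
            (z2 ^ (K * q - j * b) * starRingEnd ℂ z2 ^ (K * q - (m - j) * b + N * q)) := by ring
      _ = _ := by
        rw [pow_sub_mul_mul_pow_sub_add _ _ h1 hjm, pow_sub_mul_mul_pow_sub_add _ _ h2 hjm,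
          mul_conj, mul_conj]
        simp only [r, w, map_pow, map_mul, ofReal_mul, ofReal_pow]
        ring
  rw [sum_congr rfl hterm, ← mul_sum, sum_range_inv_factorial_mul_pow_mul_pow, add_conj,
    ← ofReal_natCast, ← ofReal_pow, ← ofReal_div, mul_comm, ← mul_assoc, ← ofReal_mul,
    re_ofReal_mul, conj_re]
  simp only [r, normSq_eq_norm_sq, ← pow_mul, mul_pow]
  ring
end

section
/- Let X = f₁(z)∂_{z₁}+f₂(z)∂_{z₂} be a vector field on ℂ² with polynomial coefficients and let ((U₀,…,U_m),(V₀,…,V_m)) be an X-pair of chains. Suppose c₀,…,c_m and d₀,…,d_m are nonzero complex numbers such that the sequences (c₀U₀,…,c_mU_m) and (d₀V₀,…,d_mV_m) again form an X-pair of chains. Then there exists a nonzero τ ∈ ℂ such that c_j·conj(d_{m−j}) = τ for all j = 0,…,m; consequently, for all z ∈ ℂ², Re(Σ_{j=0}^m c_jU_j(z)·conj(d_{m−j}V_{m−j}(z))) = Re(τ·Σ_{j=0}^m U_j(z)·conj(V_{m−j}(z))). -/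
open Complex MvPolynomial Finset

/-- Evaluation of a holomorphic polynomial `f ∈ ℂ[z₁,z₂]` at `z = (z₁,z₂)`. -/
noncomputable def evalF2 (f : MvPolynomial (Fin 2) ℂ) (z : ℂ × ℂ) : ℂ :=
  MvPolynomial.eval ![z.1, z.2] f

/-- Weighted homogeneity of a holomorphic polynomial in `(z₁,z₂)` of weighted
degree `d` with respect to weights `(μ₁, μ₂)`. -/
def WHom2 (mu1 mu2 d : ℝ) (f : MvPolynomial (Fin 2) ℂ) : Prop :=
  ∀ m : Fin 2 →₀ ℕ, MvPolynomial.coeff m f ≠ 0 →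
    mu1 * (m 0 : ℝ) + mu2 * (m 1 : ℝ) = d

/-- The action of the vector field `X = f₁∂_{z₁} + f₂∂_{z₂}` on a polynomial. -/
noncomputable def XD (f1 f2 U : MvPolynomial (Fin 2) ℂ) : MvPolynomial (Fin 2) ℂ :=
  f1 * MvPolynomial.pderiv (0 : Fin 2) U + f2 * MvPolynomial.pderiv (1 : Fin 2) U

/-- An `X`-pair of chains of length `m+1` for `X = f₁∂_{z₁} + f₂∂_{z₂}`: sequences
`U₀,…,U_m`, `V₀,…,V_m` of nonzero weighted homogeneous polynomials with nonzero
constants `A_j, B_j` such that `X(U_m) = 0`, `X(U_j) = A_j·U_{j+1}`, `X(V_m) = 0`,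
`X(V_j) = B_j·V_{j+1}`, and `A_j = −conj(B_{m−j−1})`. -/
structure IsXPair (mu1 mu2 : ℝ) (f1 f2 : MvPolynomial (Fin 2) ℂ) (m : ℕ)
    (U V : ℕ → MvPolynomial (Fin 2) ℂ) (A B : ℕ → ℂ) : Prop where
  U_ne : ∀ j ≤ m, U j ≠ 0
  V_ne : ∀ j ≤ m, V j ≠ 0
  U_hom : ∀ j ≤ m, ∃ d : ℝ, WHom2 mu1 mu2 d (U j)
  V_hom : ∀ j ≤ m, ∃ d : ℝ, WHom2 mu1 mu2 d (V j)
  A_ne : ∀ j < m, A j ≠ 0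
  B_ne : ∀ j < m, B j ≠ 0
  XUm : XD f1 f2 (U m) = 0
  XU : ∀ j < m, XD f1 f2 (U j) = MvPolynomial.C (A j) * U (j + 1)
  XVm : XD f1 f2 (V m) = 0
  XV : ∀ j < m, XD f1 f2 (V j) = MvPolynomial.C (B j) * V (j + 1)
  AB : ∀ j < m, A j = -(starRingEnd ℂ) (B (m - j - 1))

lemma XD_C_mul (f1 f2 U : MvPolynomial (Fin 2) ℂ) (c : ℂ) :
    XD f1 f2 (MvPolynomial.C c * U) = MvPolynomial.C c * XD f1 f2 U := by
  simp only [XD, MvPolynomial.pderiv_C_mul]; ring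


/-- if `(U, V)` is an `X`-pair of chains and the rescaled sequences
`(c_jU_j)`, `(d_jV_j)` (with all `c_j, d_j ≠ 0`) again form an `X`-pair of chains,
then there is a nonzero `τ ∈ ℂ` with `c_j·conj(d_{m−j}) = τ` for all `j ≤ m`;
consequently the chain sums satisfy
`Re(Σ_j c_jU_j·conj(d_{m−j}V_{m−j})) = Re(τ·Σ_j U_j·conj(V_{m−j}))`. -/
theorem stmt_10 (mu1 mu2 : ℝ) (f1 f2 : MvPolynomial (Fin 2) ℂ) (m : ℕ)
    (U V : ℕ → MvPolynomial (Fin 2) ℂ) (A B : ℕ → ℂ)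
    (hUV : IsXPair mu1 mu2 f1 f2 m U V A B)
    (cs ds : ℕ → ℂ) (hc : ∀ j ≤ m, cs j ≠ 0) (hd : ∀ j ≤ m, ds j ≠ 0)
    (A' B' : ℕ → ℂ)
    (h' : IsXPair mu1 mu2 f1 f2 m
        (fun j => MvPolynomial.C (cs j) * U j)
        (fun j => MvPolynomial.C (ds j) * V j) A' B') :
    ∃ τ : ℂ, τ ≠ 0 ∧ (∀ j ≤ m, cs j * (starRingEnd ℂ) (ds (m - j)) = τ) ∧
      ∀ z : ℂ × ℂ,
        (∑ j ∈ Finset.range (m + 1),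
          (cs j * evalF2 (U j) z) *
            (starRingEnd ℂ) (ds (m - j) * evalF2 (V (m - j)) z)).re =
        (τ * ∑ j ∈ Finset.range (m + 1),
          evalF2 (U j) z * (starRingEnd ℂ) (evalF2 (V (m - j)) z)).re := by
  -- scalar recurrence for the c's
  have hcA : ∀ j < m, cs j * A j = A' j * cs (j + 1) := by
    intro j hj
    have h1 := h'.XU j hj
    simp only [XD_C_mul] at h1
    rw [hUV.XU j hj] at h1
    have h2 : MvPolynomial.C (cs j * A j) * U (j + 1)
        = MvPolynomial.C (A' j * cs (j + 1)) * U (j + 1) := by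
      rw [MvPolynomial.C_mul, MvPolynomial.C_mul]
      linear_combination h1
    have h3 := mul_right_cancel₀ (hUV.U_ne (j + 1) hj) h2
    exact MvPolynomial.C_injective _ _ h3
  have hdB : ∀ j < m, ds j * B j = B' j * ds (j + 1) := by
    intro j hj
    have h1 := h'.XV j hj
    simp only [XD_C_mul] at h1
    rw [hUV.XV j hj] at h1
    have h2 : MvPolynomial.C (ds j * B j) * V (j + 1)
        = MvPolynomial.C (B' j * ds (j + 1)) * V (j + 1) := by
      rw [MvPolynomial.C_mul, MvPolynomial.C_mul]
      linear_combination h1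
    have h3 := mul_right_cancel₀ (hUV.V_ne (j + 1) hj) h2
    exact MvPolynomial.C_injective _ _ h3
  -- the key step: e j := cs j * conj (ds (m - j)) is constant
  have hstep : ∀ j < m,
      cs j * (starRingEnd ℂ) (ds (m - j)) = cs (j + 1) * (starRingEnd ℂ) (ds (m - (j + 1))) := by
    intro j hj
    set k := m - j - 1 with hk
    have hkm : k < m := by omega
    have hk1 : k + 1 = m - j := by omega
    have hkj : m - (j + 1) = k := by omega
    have e1 := hcA j hj
    rw [hUV.AB j hj, h'.AB j hj] at e1
    have e2 : (starRingEnd ℂ) (ds k) * (starRingEnd ℂ) (B k)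
        = (starRingEnd ℂ) (B' k) * (starRingEnd ℂ) (ds (k + 1)) := by
      have := congrArg (starRingEnd ℂ) (hdB k hkm)
      simpa [map_mul] using this
    have hBk : (starRingEnd ℂ) (B k) ≠ 0 := by
      simpa using hUV.B_ne k hkm
    have hds1 : ds (k + 1) ≠ 0 := hd (k + 1) (by omega)
    -- from e1 : cs j * (-conj (B k)) = -conj (B' k) * cs (j+1)
    have e1' : cs j * (starRingEnd ℂ) (B k) = (starRingEnd ℂ) (B' k) * cs (j + 1) := by
      linear_combination -e1
    have key : (starRingEnd ℂ) (B k) * (cs j * (starRingEnd ℂ) (ds (k + 1)))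
        = (starRingEnd ℂ) (B k) * (cs (j + 1) * (starRingEnd ℂ) (ds k)) := by
      calc (starRingEnd ℂ) (B k) * (cs j * (starRingEnd ℂ) (ds (k + 1)))
          = (cs j * (starRingEnd ℂ) (B k)) * (starRingEnd ℂ) (ds (k + 1)) := by ring
        _ = ((starRingEnd ℂ) (B' k) * (starRingEnd ℂ) (ds (k + 1))) * cs (j + 1) := by
            rw [e1']; ring
        _ = ((starRingEnd ℂ) (ds k) * (starRingEnd ℂ) (B k)) * cs (j + 1) := by rw [← e2]
        _ = (starRingEnd ℂ) (B k) * (cs (j + 1) * (starRingEnd ℂ) (ds k)) := by ring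
    have := mul_left_cancel₀ hBk key
    rw [hk1] at this
    rw [this, hkj]
  have hconst : ∀ j ≤ m, cs j * (starRingEnd ℂ) (ds (m - j)) = cs 0 * (starRingEnd ℂ) (ds m) := by
    intro j hj
    induction j with
    | zero => simp
    | succ n ih =>
      have hn : n < m := by omega
      rw [← hstep n hn]
      exact ih (by omega)
  refine ⟨cs 0 * (starRingEnd ℂ) (ds m), ?_, ?_, ?_⟩
  · exact mul_ne_zero (hc 0 (Nat.zero_le _)) (by simpa using hd m le_rfl)
  · intro j hj; simpa using hconst j hj
  · intro z
    congr 1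
    rw [Finset.mul_sum]
    refine Finset.sum_congr rfl fun j hj => ?_
    have hjm : j ≤ m := by simpa [Nat.lt_succ_iff] using Finset.mem_range.mp hj
    have := hconst j hjm
    rw [map_mul]
    calc cs j * evalF2 (U j) z * ((starRingEnd ℂ) (ds (m - j)) * (starRingEnd ℂ) (evalF2 (V (m - j)) z))
        = (cs j * (starRingEnd ℂ) (ds (m - j))) * (evalF2 (U j) z * (starRingEnd ℂ) (evalF2 (V (m - j)) z)) := by ring
      _ = _ := by rw [this]
end

section
/- Let X = i·z₁^α z₂^β (q z₁∂_{z₁} − p z₂∂_{z₂}), where p, q are coprime nonnegative integers not both zero and α, β are nonnegative integers with p·β ≠ q·α. Let ((U₀,…,U_m),(V₀,…,V_m)) be an X-pair of chains. Then there exist finitely many X-pairs of chains ((U₀ᵗ,…,U_{m_t}ᵗ),(V₀ᵗ,…,V_{m_t}ᵗ)), t = 1,…,M, in which every polynomial U_jᵗ and V_jᵗ is a monomial, such that for all z ∈ ℂ²: Re(Σ_{j=0}^m U_j(z)·conj(V_{m−j}(z))) = Σ_{t=1}^M Re(Σ_{j=0}^{m_t} U_jᵗ(z)·conj(V_{m_t−j}ᵗ(z))).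 -/
open Complex MvPolynomial Finset

/-!
The field `X` maps each monomial `z^d` to a multiple of `z^(d+e)`, where `e = (α, β)`. Hence a
chain `W₀, …, W_m` splits, along the monomials `z^s` of `W₀`, into monomial chains
`j ↦ (coefficient of z^(s+je) in W_j) · z^(s+je)`, each nonzero up to its lifetime and zero after
it. Expanding the pairing `∑ U_j · conj V_{m-j}` bilinearly, a pair of monomial chains with
lifetimes `a` and `b` contributes nothing when `a + b < m`; otherwise its contribution is the
pairing of the two chains cut down to the indices `m-b, …, a` and `m-a, …, b`, which is again an
`X`-pair: the relation between the `A_j` and the `B_j` survives the index shift.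
-/

open ComplexConjugate

section MonomialShift

variable {σ K : Type*} [Field K]

def ShiftsMonomials (L : MvPolynomial σ K →ₗ[K] MvPolynomial σ K) (e : σ →₀ ℕ)
    (c : (σ →₀ ℕ) → K) : Prop :=
  ∀ d a, L (monomial d a) = monomial (d + e) (c d * a)

noncomputable def monomialComponent (e : σ →₀ ℕ) (W : ℕ → MvPolynomial σ K) (s : σ →₀ ℕ)
    (j : ℕ) : MvPolynomial σ K :=
  monomial (s + j • e) (coeff (s + j • e) (W j))

open Classical in
noncomputable def lifetime (e : σ →₀ ℕ) (m : ℕ) (W : ℕ → MvPolynomial σ K) (s : σ →₀ ℕ) : ℕ :=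
  Nat.findGreatest (fun j => monomialComponent e W s j ≠ 0) m

variable {L : MvPolynomial σ K →ₗ[K] MvPolynomial σ K} {e : σ →₀ ℕ} {c : (σ →₀ ℕ) → K}
  {W : ℕ → MvPolynomial σ K} {A : ℕ → K} {m : ℕ}

theorem lifetime_le (e : σ →₀ ℕ) (m : ℕ) (W : ℕ → MvPolynomial σ K) (s : σ →₀ ℕ) :
    lifetime e m W s ≤ m := by
  classical
  exact Nat.findGreatest_le m

theorem monomialComponent_eq_zero_of_lifetime_lt {s : σ →₀ ℕ} {j : ℕ}
    (h : lifetime e m W s < j) (hj : j ≤ m) : monomialComponent e W s j = 0 := by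
  classical
  exact not_not.mp (Nat.findGreatest_is_greatest h hj)

namespace ShiftsMonomials

theorem coeff_add (hL : ShiftsMonomials L e c) (d : σ →₀ ℕ) (P : MvPolynomial σ K) :
    coeff (d + e) (L P) = c d * coeff d P := by
  classical
  induction P using MvPolynomial.induction_on' with
  | monomial u a =>
    rw [hL, coeff_monomial, coeff_monomial]
    split_ifs <;> simp_all
  | add P Q hP hQ => simp only [map_add, MvPolynomial.coeff_add, hP, hQ, mul_add]

theorem map_monomialComponent (hL : ShiftsMonomials L e c) {j : ℕ} {a : K}
    (hW : L (W j) = C a * W (j + 1)) (s : σ →₀ ℕ) :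
    L (monomialComponent e W s j) = C a * monomialComponent e W s (j + 1) := by
  have h := hL.coeff_add (s + j • e) (W j)
  rw [hW, coeff_C_mul] at h
  rw [monomialComponent, monomialComponent, hL, C_mul_monomial, ← h, succ_nsmul, add_assoc]

theorem monomialComponent_succ (hL : ShiftsMonomials L e c) {j : ℕ} {a : K}
    (hW : L (W j) = C a * W (j + 1)) (ha : a ≠ 0) (s : σ →₀ ℕ) :
    monomialComponent e W s (j + 1) = a⁻¹ • L (monomialComponent e W s j) := by
  rw [hL.map_monomialComponent hW, C_mul', inv_smul_smul₀ ha]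

theorem sum_monomialComponent (hL : ShiftsMonomials L e c)
    (hW : ∀ j < m, L (W j) = C (A j) * W (j + 1)) (hA : ∀ j < m, A j ≠ 0) {j : ℕ} (hj : j ≤ m) :
    ∑ s ∈ (W 0).support, monomialComponent e W s j = W j := by
  induction j with
  | zero => simp [monomialComponent]
  | succ j ih =>
    have hjm : j < m := hj
    have hWj : W (j + 1) = (A j)⁻¹ • L (W j) := by
      rw [hW j hjm, C_mul', inv_smul_smul₀ (hA j hjm)]
    simp only [hL.monomialComponent_succ (hW j hjm) (hA j hjm), ← Finset.smul_sum, ← map_sum,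
      ih hjm.le, hWj]

theorem monomialComponent_eq_zero_of_le (hL : ShiftsMonomials L e c)
    (hW : ∀ j < m, L (W j) = C (A j) * W (j + 1)) (hA : ∀ j < m, A j ≠ 0) {s : σ →₀ ℕ}
    {i j : ℕ} (hij : i ≤ j) (hj : j ≤ m) (hi : monomialComponent e W s i = 0) :
    monomialComponent e W s j = 0 := by
  induction j, hij using Nat.le_induction with
  | base => exact hi
  | succ k _ ih =>
    rw [hL.monomialComponent_succ (hW k hj) (hA k hj), ih (by omega), map_zero, smul_zero]

theorem monomialComponent_ne_zero_of_le_lifetime (hL : ShiftsMonomials L e c)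
    (hW : ∀ j < m, L (W j) = C (A j) * W (j + 1)) (hA : ∀ j < m, A j ≠ 0) {s : σ →₀ ℕ}
    (hs : s ∈ (W 0).support) {j : ℕ} (hj : j ≤ lifetime e m W s) :
    monomialComponent e W s j ≠ 0 := by
  have h0 : monomialComponent e W s 0 ≠ 0 := by simpa [monomialComponent] using hs
  have hlife : monomialComponent e W s (lifetime e m W s) ≠ 0 := by
    classical
    exact Nat.findGreatest_spec (P := fun j => monomialComponent e W s j ≠ 0) (Nat.zero_le m) h0
  exact fun h => hlife (hL.monomialComponent_eq_zero_of_le hW hA hj (lifetime_le e m W s) h)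

theorem map_monomialComponent_lifetime (hL : ShiftsMonomials L e c)
    (hW : ∀ j < m, L (W j) = C (A j) * W (j + 1)) (hWm : L (W m) = 0) (s : σ →₀ ℕ) :
    L (monomialComponent e W s (lifetime e m W s)) = 0 := by
  rcases (lifetime_le e m W s).lt_or_eq with h | h
  · rw [hL.map_monomialComponent (hW _ h),
      monomialComponent_eq_zero_of_lifetime_lt (Nat.lt_succ_self _) h, mul_zero]
  · rw [h, hL.map_monomialComponent (a := 0) (by rw [hWm, C_0, zero_mul]), C_0, zero_mul]

end ShiftsMonomials

end MonomialShift

noncomputable def xdLinearMap (f1 f2 : MvPolynomial (Fin 2) ℂ) :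
    MvPolynomial (Fin 2) ℂ →ₗ[ℂ] MvPolynomial (Fin 2) ℂ :=
  LinearMap.mulLeft ℂ f1 ∘ₗ (pderiv 0).toLinearMap +
    LinearMap.mulLeft ℂ f2 ∘ₗ (pderiv 1).toLinearMap

theorem xdLinearMap_apply (f1 f2 U : MvPolynomial (Fin 2) ℂ) :
    xdLinearMap f1 f2 U = XD f1 f2 U :=
  rfl

theorem shiftsMonomials_xdLinearMap (p q al be : ℕ) :
    ShiftsMonomials
      (xdLinearMap (C (I * q) * X 0 ^ (al + 1) * X 1 ^ be)
        (C (-(I * p)) * X 0 ^ al * X 1 ^ (be + 1)))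
      (Finsupp.single 0 al + Finsupp.single 1 be) (fun d => I * (q * d 0 - p * d 1)) := by
  intro d a
  have hfactor :
      XD (C (I * q) * X 0 ^ (al + 1) * X 1 ^ be) (C (-(I * p)) * X 0 ^ al * X 1 ^ (be + 1))
        (monomial d a) =
      monomial (Finsupp.single 0 al + Finsupp.single 1 be) 1 *
        (C (I * q) * (X 0 * pderiv 0 (monomial d a)) +
          C (-(I * p)) * (X 1 * pderiv 1 (monomial d a))) := by
    rw [XD, ← mul_one (1 : ℂ), ← monomial_mul, ← X_pow_eq_monomial, ← X_pow_eq_monomial]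
    ring
  rw [xdLinearMap_apply, hfactor, X_mul_pderiv_monomial, X_mul_pderiv_monomial, smul_monomial,
    smul_monomial, C_mul_monomial, C_mul_monomial, ← map_add, monomial_mul, add_comm d]
  congr 1
  simp only [nsmul_eq_mul]
  ring

section Pairing

noncomputable def chainPairing (m : ℕ) (U V : ℕ → MvPolynomial (Fin 2) ℂ) (z : ℂ × ℂ) : ℂ :=
  ∑ j ∈ range (m + 1), evalF2 (U j) z * conj (evalF2 (V (m - j)) z)

variable {m : ℕ} {U V : ℕ → MvPolynomial (Fin 2) ℂ} (z : ℂ × ℂ)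

theorem chainPairing_eq_sum_prod {ι κ : Type*} {S : Finset ι} {T : Finset κ}
    {U' : ι → ℕ → MvPolynomial (Fin 2) ℂ} {V' : κ → ℕ → MvPolynomial (Fin 2) ℂ}
    (hU : ∀ j ≤ m, ∑ s ∈ S, U' s j = U j) (hV : ∀ j ≤ m, ∑ t ∈ T, V' t j = V j) :
    chainPairing m U V z = ∑ st ∈ S ×ˢ T, chainPairing m (U' st.1) (V' st.2) z := by
  unfold chainPairing
  rw [Finset.sum_comm]
  refine Finset.sum_congr rfl fun j hj => ?_
  have hj : j ≤ m := Nat.lt_succ_iff.mp (mem_range.mp hj)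
  rw [← hU j hj, ← hV (m - j) (Nat.sub_le m j), evalF2, evalF2, map_sum, map_sum, map_sum,
    Finset.sum_mul_sum, ← Finset.sum_product']
  rfl

theorem chainPairing_eq_sum_Ico {a b : ℕ} (ha : a ≤ m)
    (hU : ∀ j, a < j → j ≤ m → U j = 0) (hV : ∀ j, b < j → j ≤ m → V j = 0) :
    chainPairing m U V z =
      ∑ j ∈ Ico (m - b) (a + 1), evalF2 (U j) z * conj (evalF2 (V (m - j)) z) := by
  refine (Finset.sum_subset (fun j hj => ?_) fun j hj hj' => ?_).symm
  · simp only [mem_Ico, mem_range] at hj ⊢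
    omega
  · simp only [mem_Ico, mem_range, not_and_or, not_le, not_lt] at hj hj'
    rcases hj' with h | h
    · rw [hV (m - j) (by omega) (by omega)]
      simp [evalF2]
    · rw [hU j (by omega) (by omega)]
      simp [evalF2]

theorem chainPairing_eq_zero {a b : ℕ} (hab : a + b < m)
    (hU : ∀ j, a < j → j ≤ m → U j = 0) (hV : ∀ j, b < j → j ≤ m → V j = 0) :
    chainPairing m U V z = 0 := by
  rw [chainPairing_eq_sum_Ico z (by omega) hU hV, Finset.Ico_eq_empty (by omega), sum_empty]

theorem chainPairing_eq_chainPairing_shift {a b : ℕ} (ha : a ≤ m) (hb : b ≤ m) (hab : m ≤ a + b)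
    (hU : ∀ j, a < j → j ≤ m → U j = 0) (hV : ∀ j, b < j → j ≤ m → V j = 0) :
    chainPairing m U V z =
      chainPairing (a + b - m) (fun j => U (j + (m - b))) (fun j => V (j + (m - a))) z := by
  rw [chainPairing_eq_sum_Ico z ha hU hV, Finset.sum_Ico_eq_sum_range, chainPairing,
    show a + 1 - (m - b) = a + b - m + 1 by omega]
  refine Finset.sum_congr rfl fun j hj => ?_
  have hj := mem_range.mp hj
  rw [add_comm j, show m - (m - b + j) = a + b - m - j + (m - a) by omega]

end Pairing

theorem WHom2_monomial (mu1 mu2 : ℝ) (d : Fin 2 →₀ ℕ) (a : ℂ) :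
    WHom2 mu1 mu2 (mu1 * d 0 + mu2 * d 1) (monomial d a) := by
  classical
  intro n hn
  rw [coeff_monomial] at hn
  split_ifs at hn with h
  · rw [h]
  · exact absurd rfl hn

namespace IsXPair

variable {mu1 mu2 : ℝ} {f1 f2 : MvPolynomial (Fin 2) ℂ} {m : ℕ}
  {U V : ℕ → MvPolynomial (Fin 2) ℂ} {A B : ℕ → ℂ} {e : Fin 2 →₀ ℕ} {c : (Fin 2 →₀ ℕ) → ℂ}

/-- The offsets `m - b` and `m - a` keep exactly the terms of the pairing sum in which both
components are alive, `a` and `b` being their lifetimes. -/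
theorem monomialComponent_pair (hL : ShiftsMonomials (xdLinearMap f1 f2) e c)
    (h : IsXPair mu1 mu2 f1 f2 m U V A B) {s t : Fin 2 →₀ ℕ} (hs : s ∈ (U 0).support)
    (ht : t ∈ (V 0).support) (hm : m ≤ lifetime e m U s + lifetime e m V t) :
    IsXPair mu1 mu2 f1 f2 (lifetime e m U s + lifetime e m V t - m)
      (fun j => monomialComponent e U s (j + (m - lifetime e m V t)))
      (fun j => monomialComponent e V t (j + (m - lifetime e m U s)))
      (fun j => A (j + (m - lifetime e m V t))) (fun j => B (j + (m - lifetime e m U s))) := by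
  have hU : ∀ j < m, xdLinearMap f1 f2 (U j) = C (A j) * U (j + 1) := h.XU
  have hV : ∀ j < m, xdLinearMap f1 f2 (V j) = C (B j) * V (j + 1) := h.XV
  have ha := lifetime_le e m U s
  have hb := lifetime_le e m V t
  set a := lifetime e m U s
  set b := lifetime e m V t
  refine ⟨fun j hj => hL.monomialComponent_ne_zero_of_le_lifetime hU h.A_ne hs (by omega),
    fun j hj => hL.monomialComponent_ne_zero_of_le_lifetime hV h.B_ne ht (by omega),
    fun j _ => ⟨_, WHom2_monomial mu1 mu2 _ _⟩, fun j _ => ⟨_, WHom2_monomial mu1 mu2 _ _⟩,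
    fun j hj => h.A_ne _ (by omega), fun j hj => h.B_ne _ (by omega), ?_, fun j hj => ?_, ?_,
    fun j hj => ?_, fun j hj => ?_⟩
  · rw [show a + b - m + (m - b) = a by omega]
    exact hL.map_monomialComponent_lifetime hU h.XUm s
  · rw [show j + 1 + (m - b) = j + (m - b) + 1 by omega]
    exact hL.map_monomialComponent (hU _ (by omega)) s
  · rw [show a + b - m + (m - a) = b by omega]
    exact hL.map_monomialComponent_lifetime hV h.XVm t
  · rw [show j + 1 + (m - a) = j + (m - a) + 1 by omega]
    exact hL.map_monomialComponent (hV _ (by omega)) t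
  · rw [show a + b - m - j - 1 + (m - a) = m - (j + (m - b)) - 1 by omega]
    exact h.AB _ (by omega)

theorem exists_monomial_decomposition (hL : ShiftsMonomials (xdLinearMap f1 f2) e c)
    (h : IsXPair mu1 mu2 f1 f2 m U V A B) :
    ∃ (M : ℕ) (mt : Fin M → ℕ) (Ut Vt : Fin M → ℕ → MvPolynomial (Fin 2) ℂ)
      (At Bt : Fin M → ℕ → ℂ),
      (∀ t, IsXPair mu1 mu2 f1 f2 (mt t) (Ut t) (Vt t) (At t) (Bt t)) ∧
      (∀ t, ∀ j ≤ mt t, (∃ d a, Ut t j = monomial d a) ∧ (∃ d a, Vt t j = monomial d a)) ∧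
      ∀ z, (chainPairing m U V z).re = ∑ t, (chainPairing (mt t) (Ut t) (Vt t) z).re := by
  classical
  have hU : ∀ j < m, xdLinearMap f1 f2 (U j) = C (A j) * U (j + 1) := h.XU
  have hV : ∀ j < m, xdLinearMap f1 f2 (V j) = C (B j) * V (j + 1) := h.XV
  set a := lifetime e m U
  set b := lifetime e m V
  set G := ((U 0).support ×ˢ (V 0).support).filter fun st => m ≤ a st.1 + b st.2
  have hG : ∀ st ∈ G, st.1 ∈ (U 0).support ∧ st.2 ∈ (V 0).support ∧ m ≤ a st.1 + b st.2 := by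
    simp [G, and_assoc]
  let g : Fin G.card ≃ G := G.equivFin.symm
  refine ⟨G.card, fun t => a (g t).1.1 + b (g t).1.2 - m,
    fun t j => monomialComponent e U (g t).1.1 (j + (m - b (g t).1.2)),
    fun t j => monomialComponent e V (g t).1.2 (j + (m - a (g t).1.1)),
    fun t j => A (j + (m - b (g t).1.2)), fun t j => B (j + (m - a (g t).1.1)),
    fun t => h.monomialComponent_pair hL (hG _ (g t).2).1 (hG _ (g t).2).2.1 (hG _ (g t).2).2.2,
    fun t j _ => ⟨⟨_, _, rfl⟩, _, _, rfl⟩, fun z => ?_⟩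
  rw [← re_sum]
  congr 1
  calc chainPairing m U V z
      = ∑ st ∈ (U 0).support ×ˢ (V 0).support,
          chainPairing m (monomialComponent e U st.1) (monomialComponent e V st.2) z :=
        chainPairing_eq_sum_prod z (fun j hj => hL.sum_monomialComponent hU h.A_ne hj)
          (fun j hj => hL.sum_monomialComponent hV h.B_ne hj)
    _ = ∑ st ∈ G,
          chainPairing m (monomialComponent e U st.1) (monomialComponent e V st.2) z := by
        refine (Finset.sum_filter_of_ne fun st _ hne => ?_).symm
        by_contra hlt
        exact hne (chainPairing_eq_zero z (not_le.mp hlt)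
          (fun j => monomialComponent_eq_zero_of_lifetime_lt)
          (fun j => monomialComponent_eq_zero_of_lifetime_lt))
    _ = ∑ st ∈ G, chainPairing (a st.1 + b st.2 - m)
          (fun j => monomialComponent e U st.1 (j + (m - b st.2)))
          (fun j => monomialComponent e V st.2 (j + (m - a st.1))) z :=
        Finset.sum_congr rfl fun st hst => chainPairing_eq_chainPairing_shift z
          (lifetime_le e m U _) (lifetime_le e m V _) (hG st hst).2.2
          (fun j => monomialComponent_eq_zero_of_lifetime_lt)
          (fun j => monomialComponent_eq_zero_of_lifetime_lt)
    _ = _ := by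
        rw [← Finset.sum_coe_sort G]
        exact (Equiv.sum_comp g _).symm

end IsXPair

theorem stmt_11_general (mu1 mu2 : ℝ) (p q al be : ℕ)
    (f1 f2 : MvPolynomial (Fin 2) ℂ)
    (hf1 : f1 = MvPolynomial.C (Complex.I * q) *
        MvPolynomial.X 0 ^ (al + 1) * MvPolynomial.X 1 ^ be)
    (hf2 : f2 = MvPolynomial.C (-(Complex.I * p)) *
        MvPolynomial.X 0 ^ al * MvPolynomial.X 1 ^ (be + 1))
    (m : ℕ) (U V : ℕ → MvPolynomial (Fin 2) ℂ) (A B : ℕ → ℂ)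
    (hUV : IsXPair mu1 mu2 f1 f2 m U V A B) :
    ∃ (M : ℕ) (mt : Fin M → ℕ)
      (Ut Vt : Fin M → ℕ → MvPolynomial (Fin 2) ℂ)
      (At Bt : Fin M → ℕ → ℂ),
      (∀ t : Fin M, IsXPair mu1 mu2 f1 f2 (mt t) (Ut t) (Vt t) (At t) (Bt t)) ∧
      (∀ (t : Fin M), ∀ j ≤ mt t,
        (∃ (d : Fin 2 →₀ ℕ) (a : ℂ), Ut t j = MvPolynomial.monomial d a) ∧
        (∃ (d : Fin 2 →₀ ℕ) (a : ℂ), Vt t j = MvPolynomial.monomial d a)) ∧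
      (∀ z : ℂ × ℂ,
        (∑ j ∈ Finset.range (m + 1),
          evalF2 (U j) z * (starRingEnd ℂ) (evalF2 (V (m - j)) z)).re =
        ∑ t : Fin M,
          (∑ j ∈ Finset.range (mt t + 1),
            evalF2 (Ut t j) z * (starRingEnd ℂ) (evalF2 (Vt t (mt t - j)) z)).re) := by
  subst hf1 hf2
  exact hUV.exists_monomial_decomposition (shiftsMonomials_xdLinearMap p q al be)

/-- every `X`-pair of chains for the monomial field
`X = i·z₁^α z₂^β (q z₁∂_{z₁} − p z₂∂_{z₂})` (`p, q` coprime, not both zero,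
`pβ ≠ qα`) decomposes: there are finitely many `X`-pairs of chains consisting of
monomials whose chain sums add up to the chain sum of the given pair. -/
theorem stmt_11 (mu1 mu2 : ℝ) (p q al be : ℕ)
    (hpq : Nat.gcd p q = 1) (hpq0 : ¬(p = 0 ∧ q = 0)) (hab : p * be ≠ q * al)
    (f1 f2 : MvPolynomial (Fin 2) ℂ)
    (hf1 : f1 = MvPolynomial.C (Complex.I * q) *
        MvPolynomial.X 0 ^ (al + 1) * MvPolynomial.X 1 ^ be)
    (hf2 : f2 = MvPolynomial.C (-(Complex.I * p)) *
        MvPolynomial.X 0 ^ al * MvPolynomial.X 1 ^ (be + 1))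
    (m : ℕ) (U V : ℕ → MvPolynomial (Fin 2) ℂ) (A B : ℕ → ℂ)
    (hUV : IsXPair mu1 mu2 f1 f2 m U V A B) :
    ∃ (M : ℕ) (mt : Fin M → ℕ)
      (Ut Vt : Fin M → ℕ → MvPolynomial (Fin 2) ℂ)
      (At Bt : Fin M → ℕ → ℂ),
      (∀ t : Fin M, IsXPair mu1 mu2 f1 f2 (mt t) (Ut t) (Vt t) (At t) (Bt t)) ∧
      (∀ (t : Fin M), ∀ j ≤ mt t,
        (∃ (d : Fin 2 →₀ ℕ) (a : ℂ), Ut t j = MvPolynomial.monomial d a) ∧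
        (∃ (d : Fin 2 →₀ ℕ) (a : ℂ), Vt t j = MvPolynomial.monomial d a)) ∧
      (∀ z : ℂ × ℂ,
        (∑ j ∈ Finset.range (m + 1),
          evalF2 (U j) z * (starRingEnd ℂ) (evalF2 (V (m - j)) z)).re =
        ∑ t : Fin M,
          (∑ j ∈ Finset.range (mt t + 1),
            evalF2 (Ut t j) z * (starRingEnd ℂ) (evalF2 (Vt t (mt t - j)) z)).re) :=
  stmt_11_general mu1 mu2 p q al be f1 f2 hf1 hf2 m U V A B hUV
end
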